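/- Let λ, λ' > 0 and ε, ε' ≥ 0. Suppose β ∈ ℝ^p is an ε-solution for λ and β' ∈ ℝ^p is an ε'-solution for λ', with P_λ(β) and P_{λ'}(β') finite. Then (1 − λ'/λ)(f(Xβ') − f(Xβ)) ≤ ε' + (λ'/λ)ε. -/

import Mathlib

/-!
Testing the `ε`-optimality of `β` against `β'`, and that of `β'` against `β`, gives two real
inequalities between `f(Xβ)`, `f(Xβ')`, `Ω(β)` and `Ω(β')` (finiteness of the objectives makes
the `Ω` values real). Scaling the first by `λ'/λ ≥ 0` and adding eliminates `Ω(β) - Ω(β')`.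
-/

open scoped RealInnerProductSpace

noncomputable section

abbrev Vec (d : ℕ) := EuclideanSpace ℝ (Fin d)

/-- Matrix–vector product, landing in Euclidean space. -/
def mv {a b : ℕ} (M : Matrix (Fin a) (Fin b) ℝ) (v : Vec b) : Vec a := WithLp.toLp 2 (M.mulVec v)

/-- Primal objective `P_λ(β) = f(Xβ) + λ Ω(β)`, with values in `EReal`. -/
noncomputable def Pfun {n p : ℕ} (X : Matrix (Fin n) (Fin p) ℝ)
    (f : Vec n → ℝ) (Ω : Vec p → EReal) (lam : ℝ) (b : Vec p) : EReal :=
  ((f (mv X b) : ℝ) : EReal) + ((lam : ℝ) : EReal) * Ω b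

/-- `β` is an `ε`-solution for `λ`: `P_λ(β) - inf P_λ ≤ ε`. -/
noncomputable def epsSolution {n p : ℕ} (X : Matrix (Fin n) (Fin p) ℝ)
    (f : Vec n → ℝ) (Ω : Vec p → EReal) (lam ε : ℝ) (β : Vec p) : Prop :=
  Pfun X f Ω lam β - (⨅ b, Pfun X f Ω lam b) ≤ (ε : EReal)

theorem EReal.exists_eq_coe_of_coe_add_coe_mul_eq_coe {x c r : ℝ} (hc : 0 < c) {y : EReal}
    (h : (x : EReal) + c * y = r) : ∃ a : ℝ, y = a := by
  induction y using EReal.rec with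
  | bot => simp [EReal.coe_mul_bot_of_pos hc] at h
  | coe a => exact ⟨a, rfl⟩
  | top => simp [EReal.coe_mul_top_of_pos hc] at h

theorem le_add_of_sub_iInf_le {ι : Type*} {g : ι → EReal} {e : ℝ} {i : ι}
    (h : g i - ⨅ k, g k ≤ e) (j : ι) : g i ≤ g j + e := by
  rw [EReal.sub_le_iff_le_add (.inr (EReal.coe_ne_top e)) (.inr (EReal.coe_ne_bot e))] at h
  calc g i ≤ e + ⨅ k, g k := h
    _ ≤ e + g j := by gcongr; exact iInf_le g j
    _ = g j + e := add_comm _ _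

theorem one_sub_div_mul_sub_le {lam lam' ε ε' F F' a a' : ℝ} (hlam : 0 < lam) (hlam' : 0 ≤ lam')
    (h : F + lam * a ≤ F' + lam * a' + ε) (h' : F' + lam' * a' ≤ F + lam' * a + ε') :
    (1 - lam' / lam) * (F' - F) ≤ ε' + lam' / lam * ε := by
  set t := lam' / lam
  have hlam'_eq : lam' = t * lam := (div_mul_cancel₀ lam' hlam.ne').symm
  have hscaled : t * (lam * (a - a')) ≤ t * (F' - F + ε) :=
    mul_le_mul_of_nonneg_left (by linarith) (div_nonneg hlam' hlam.le)
  rw [hlam'_eq] at h'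
  linarith

section Objective

variable {n p : ℕ} {X : Matrix (Fin n) (Fin p) ℝ} {f : Vec n → ℝ} {Ω : Vec p → EReal} {lam : ℝ}

theorem exists_eq_coe_of_pfun_eq_coe (hlam : 0 < lam) {b : Vec p}
    (h : ∃ r : ℝ, Pfun X f Ω lam b = r) : ∃ a : ℝ, Ω b = a :=
  let ⟨_, hr⟩ := h
  EReal.exists_eq_coe_of_coe_add_coe_mul_eq_coe hlam hr

theorem pfun_eq_coe {b : Vec p} {a : ℝ} (ha : Ω b = a) :
    Pfun X f Ω lam b = ((f (mv X b) + lam * a : ℝ) : EReal) := by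
  rw [Pfun, ha, ← EReal.coe_mul, ← EReal.coe_add]

theorem epsSolution.pfun_le {ε : ℝ} {β : Vec p} (hβ : epsSolution X f Ω lam ε β) (b : Vec p) :
    Pfun X f Ω lam β ≤ Pfun X f Ω lam b + ε :=
  le_add_of_sub_iInf_le hβ b

end Objective

theorem stmt7_general {n p : ℕ} (X : Matrix (Fin n) (Fin p) ℝ)
    (f : Vec n → ℝ)
    (Ω : Vec p → EReal)
    (lam lam' : ℝ) (hlam : 0 < lam) (hlam' : 0 < lam')
    (ε ε' : ℝ)
    (β β' : Vec p)
    (hβ : epsSolution X f Ω lam ε β)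
    (hβ' : epsSolution X f Ω lam' ε' β')
    (hfin : ∃ r : ℝ, Pfun X f Ω lam β = (r : EReal))
    (hfin' : ∃ r : ℝ, Pfun X f Ω lam' β' = (r : EReal)) :
    (1 - lam' / lam) * (f (mv X β') - f (mv X β)) ≤ ε' + (lam' / lam) * ε := by
  obtain ⟨a, ha⟩ := exists_eq_coe_of_pfun_eq_coe hlam hfin
  obtain ⟨a', ha'⟩ := exists_eq_coe_of_pfun_eq_coe hlam' hfin'
  have h := hβ.pfun_le β'
  have h' := hβ'.pfun_le β
  rw [pfun_eq_coe ha, pfun_eq_coe ha', ← EReal.coe_add, EReal.coe_le_coe_iff] at h h'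
  exact one_sub_div_mul_sub_le hlam hlam'.le h h'

/-- Lemma: variation of the loss along the path.
If `β` is an `ε`-solution for `λ` and `β'` an `ε'`-solution for `λ'`, with
`P_λ(β)` and `P_{λ'}(β')` finite, then
`(1 - λ'/λ)(f(Xβ') - f(Xβ)) ≤ ε' + (λ'/λ) ε`. -/
theorem stmt7 {n p : ℕ} (X : Matrix (Fin n) (Fin p) ℝ)
    (f : Vec n → ℝ) (hconv : ConvexOn ℝ Set.univ f)
    (Ω : Vec p → EReal)
    (lam lam' : ℝ) (hlam : 0 < lam) (hlam' : 0 < lam')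
    (ε ε' : ℝ) (hε : 0 ≤ ε) (hε' : 0 ≤ ε')
    (β β' : Vec p)
    (hβ : epsSolution X f Ω lam ε β)
    (hβ' : epsSolution X f Ω lam' ε' β')
    (hfin : ∃ r : ℝ, Pfun X f Ω lam β = (r : EReal))
    (hfin' : ∃ r : ℝ, Pfun X f Ω lam' β' = (r : EReal)) :
    (1 - lam' / lam) * (f (mv X β') - f (mv X β)) ≤ ε' + (lam' / lam) * ε :=
  stmt7_general X f Ω lam lam' hlam hlam' ε ε' β β' hβ hβ' hfin hfin'

end
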